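/- Assume that the class of τ-torsion left R-modules is closed under submodules (τ is hereditary) and that Flat(R) has enough flat objects, i.e. for every flat module F there exist a flat object G of Flat(R) and a morphism G → F that is an epimorphism in Flat(R). Then every pure submodule of a τ-cotorsion-free flat module is flat and τ-cotorsion-free; in other words, the class of flat objects of Flat(R) is closed under pure submodules. -/

import Mathlib

universe u

/-- A module `T` is `τ`-torsion (for the torsion theory cogenerated by the flat modules) if
every `R`-linear map from `T` to a flat module is zero. -/
def TauTorsion (R : Type u) [CommRing R] (T : Type u) [AddCommGroup T] [Module R T] : Prop :=
  ∀ (F : Type u) [AddCommGroup F] [Module R F], Module.Flat R F → ∀ f : T →ₗ[R] F, f = 0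

variable {R : Type u} [CommRing R]

/-- A module `M` is `τ`-cotorsion-free if its only `τ`-dense submodule is `M` itself. -/
def TauCotorsionFree (R : Type u) [CommRing R] (M : Type u) [AddCommGroup M] [Module R M] :
    Prop :=
  ∀ K : Submodule R M, TauTorsion R (M ⧸ K) → K = ⊤

/-- `f` is an epimorphism in the category `Flat(R)` of flat modules. -/
def EpiInFlat {F G : Type u} [AddCommGroup F] [Module R F] [AddCommGroup G] [Module R G]
    (f : F →ₗ[R] G) : Prop :=
  ∀ (H : Type u) [AddCommGroup H] [Module R H], Module.Flat R H →
    ∀ g₁ g₂ : G →ₗ[R] H, g₁ ∘ₗ f = g₂ ∘ₗ f → g₁ = g₂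

/-- A flat module `G` is a flat object of `Flat(R)` if every epimorphism of `Flat(R)` with
codomain `G` is surjective. -/
def IsFlatObjectOfFlat (R : Type u) [CommRing R] (G : Type u) [AddCommGroup G] [Module R G] :
    Prop :=
  Module.Flat R G ∧
    ∀ (H : Type u) [AddCommGroup H] [Module R H], Module.Flat R H →
      ∀ h : H →ₗ[R] G, EpiInFlat h → Function.Surjective h

/-- A submodule `K ≤ M` is pure if for every finitely presented module `P`, the map
`Hom_R(P, M) → Hom_R(P, M/K)` induced by the canonical projection is surjective. -/
def IsPureSubmodule {M : Type u} [AddCommGroup M] [Module R M] (K : Submodule R M) : Prop :=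
  ∀ (P : Type u) [AddCommGroup P] [Module R P], Module.FinitePresentation R P →
    ∀ g : P →ₗ[R] M ⧸ K, ∃ h : P →ₗ[R] M, K.mkQ ∘ₗ h = g

/-! ### Auxiliary lemmas -/

/-- τ-torsion passes along surjective linear maps (in particular along isomorphisms). -/
theorem TauTorsion.of_surjective {T T' : Type u} [AddCommGroup T] [Module R T]
    [AddCommGroup T'] [Module R T'] (h : TauTorsion R T) (f : T →ₗ[R] T')
    (hf : Function.Surjective f) : TauTorsion R T' := by
  intro F _ _ hF g
  have h0 := h F hF (g ∘ₗ f)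
  ext t'
  obtain ⟨t, rfl⟩ := hf t'
  simpa using LinearMap.congr_fun h0 t

/-- If `R ⧸ I` is τ-torsion, then `M ⧸ I•M` is τ-torsion for every `M`. -/
theorem tauTorsion_quotient_smul_top (I : Ideal R) (hI : TauTorsion R (R ⧸ I))
    (M : Type u) [AddCommGroup M] [Module R M] :
    TauTorsion R (M ⧸ (I • ⊤ : Submodule R M)) := by
  intro F _ _ hF f
  refine Submodule.linearMap_qext _ ?_
  ext m
  simp only [LinearMap.comp_apply, Submodule.mkQ_apply, LinearMap.zero_apply,
    LinearMap.zero_comp]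
  have hker : I ≤ LinearMap.ker ((f ∘ₗ (I • ⊤ : Submodule R M).mkQ) ∘ₗ
      LinearMap.toSpanSingleton R M m) := by
    intro r hr
    have hmem : r • m ∈ (I • ⊤ : Submodule R M) := Submodule.smul_mem_smul hr trivial
    simp only [LinearMap.mem_ker, LinearMap.comp_apply, LinearMap.toSpanSingleton_apply,
      Submodule.mkQ_apply]
    rw [(Submodule.Quotient.mk_eq_zero _).2 hmem]
    simp
  have h0 := hI F hF (Submodule.liftQ I _ hker)
  have h1 := LinearMap.congr_fun h0 (Submodule.Quotient.mk (1 : R))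
  rw [Submodule.liftQ_apply] at h1
  simpa using h1

/-- The cokernel of an epimorphism in `Flat(R)` is τ-torsion. -/
theorem tauTorsion_quotient_range {F G : Type u} [AddCommGroup F] [Module R F]
    [AddCommGroup G] [Module R G] {f : F →ₗ[R] G} (hf : EpiInFlat f) :
    TauTorsion R (G ⧸ LinearMap.range f) := by
  intro H _ _ hH φ
  have h1 : (φ ∘ₗ (LinearMap.range f).mkQ) ∘ₗ f = (0 : G →ₗ[R] H) ∘ₗ f := by
    ext x
    simp only [LinearMap.comp_apply, Submodule.mkQ_apply, LinearMap.zero_apply,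
      LinearMap.zero_comp]
    rw [(Submodule.Quotient.mk_eq_zero _).2 (LinearMap.mem_range_self f x)]
    simp
  have h2 := hf H hH _ _ h1
  refine Submodule.linearMap_qext _ ?_
  rw [h2]
  rfl

/-- A flat object of `Flat(R)` is τ-cotorsion-free. -/
theorem IsFlatObjectOfFlat.tauCotorsionFree {G : Type u} [AddCommGroup G] [Module R G]
    (hG : IsFlatObjectOfFlat R G) : TauCotorsionFree R G := by
  intro W hW
  classical
  set θ : (↥W →₀ R) →ₗ[R] G := Finsupp.linearCombination R ((↑) : ↥W → G) with hθ
  have hrange : LinearMap.range θ = W := by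
    rw [hθ, Finsupp.range_linearCombination, Subtype.range_coe, Submodule.span_eq]
  have hepi : EpiInFlat θ := by
    intro H _ _ hH g₁ g₂ hcomp
    have hW' : W ≤ LinearMap.ker (g₁ - g₂) := by
      rw [← hrange]
      rintro _ ⟨c, rfl⟩
      simp only [LinearMap.mem_ker, LinearMap.sub_apply, sub_eq_zero]
      exact LinearMap.congr_fun hcomp c
    have h0 := hW H hH (Submodule.liftQ W (g₁ - g₂) hW')
    have h1 : g₁ - g₂ = 0 := by
      ext x
      have := LinearMap.congr_fun h0 (Submodule.Quotient.mk x)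
      simpa using this
    exact sub_eq_zero.mp h1
  have hsurj := hG.2 (↥W →₀ R) inferInstance θ hepi
  rw [← hrange]
  exact LinearMap.range_eq_top.mpr hsurj

/-- A τ-cotorsion-free module is divisible by τ-dense ideals. -/
theorem TauCotorsionFree.smul_top {M : Type u} [AddCommGroup M] [Module R M]
    (hM : TauCotorsionFree R M) {I : Ideal R} (hI : TauTorsion R (R ⧸ I)) :
    (I • ⊤ : Submodule R M) = ⊤ :=
  hM _ (tauTorsion_quotient_smul_top I hI M)

/-- Any element of the image of a map from a flat object to `R` annihilates
every τ-torsion module (assuming `τ` hereditary). -/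
theorem smul_eq_zero_of_tauTorsion
    (hher : ∀ (M : Type u) [AddCommGroup M] [Module R M], TauTorsion R M →
      ∀ K : Submodule R M, TauTorsion R ↥K)
    {G₀ : Type u} [AddCommGroup G₀] [Module R G₀] (hfo : IsFlatObjectOfFlat R G₀)
    (e₀ : G₀ →ₗ[R] R)
    {T : Type u} [AddCommGroup T] [Module R T] (hT : TauTorsion R T)
    {a : R} (ha : a ∈ LinearMap.range e₀) (t : T) : a • t = 0 := by
  set s : R →ₗ[R] T := LinearMap.toSpanSingleton R T t with hs
  set J : Ideal R := LinearMap.ker s with hJdef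
  have htr : TauTorsion R ↥(LinearMap.range s) := hher T hT _
  have hJ : TauTorsion R (R ⧸ J) :=
    htr.of_surjective ((LinearMap.quotKerEquivRange s).symm : _ →ₗ[R] _)
      (LinearMap.quotKerEquivRange s).symm.surjective
  have hJtop : (J • ⊤ : Submodule R G₀) = ⊤ := hfo.tauCotorsionFree.smul_top hJ
  have hA_le : LinearMap.range e₀ ≤ J := by
    rw [LinearMap.range_eq_map, ← hJtop, Submodule.map_smul'']
    refine Submodule.smul_le.mpr ?_
    intro r hr n _
    rw [smul_eq_mul]
    exact Ideal.mul_mem_right _ _ hr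
  have haJ : a ∈ J := hA_le ha
  simpa [hs, LinearMap.toSpanSingleton_apply] using (LinearMap.mem_ker.mp haJ)

/-- Extraction of a finite representation from membership in `I • ⊤`. -/
theorem exists_fin_rep {M : Type u} [AddCommGroup M] [Module R M] (I : Ideal R) {x : M}
    (hx : x ∈ (I • ⊤ : Submodule R M)) :
    ∃ (ι : Type u) (_ : Fintype ι) (a : ι → R) (m : ι → M),
      (∀ i, a i ∈ I) ∧ x = ∑ i, a i • m i := by
  refine Submodule.smul_induction_on hx ?_ ?_
  · intro r hr n _
    exact ⟨PUnit, inferInstance, fun _ => r, fun _ => n, fun _ => hr, by simp⟩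
  · rintro x y ⟨ι, _, a, m, ha, rfl⟩ ⟨ι', _, a', m', ha', rfl⟩
    refine ⟨ι ⊕ ι', inferInstance, Sum.elim a a', Sum.elim m m', ?_, ?_⟩
    · rintro (i | i)
      · simpa using ha i
      · simpa using ha' i
    · rw [Fintype.sum_sum_type]
      simp

/-- Purity: a finite family of elements of `M` whose `B`-combinations lie in `K` can be
replaced by a family of elements of `K` with the same `B`-combinations. -/
theorem IsPureSubmodule.exists_rep {M : Type u} [AddCommGroup M] [Module R M]
    {K : Submodule R M} (hK : IsPureSubmodule K)
    {ι κ : Type u} [Fintype ι] [Fintype κ] (B : ι → κ → R) (y : κ → M)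
    (hmem : ∀ i, ∑ j, B i j • y j ∈ K) :
    ∃ z : κ → M, (∀ j, z j ∈ K) ∧ ∀ i, ∑ j, B i j • z j = ∑ j, B i j • y j := by
  classical
  set U : Submodule R (κ → R) := Submodule.span R (Set.range fun i => (B i : κ → R)) with hU
  have hFP : Module.FinitePresentation R ((κ → R) ⧸ U) := by
    refine Module.finitePresentation_of_surjective U.mkQ (Submodule.mkQ_surjective U) ?_
    rw [Submodule.ker_mkQ, hU]
    exact Submodule.fg_span (Set.finite_range _)
  let φ : (κ → R) →ₗ[R] (M ⧸ K) :=
    { toFun := fun c => ∑ j, c j • K.mkQ (y j)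
      map_add' := by
        intro c d
        simp [add_smul, Finset.sum_add_distrib]
      map_smul' := by
        intro r c
        simp [Finset.smul_sum, smul_smul] }
  have hφ_apply : ∀ c : κ → R, φ c = K.mkQ (∑ j, c j • y j) := by
    intro c
    show ∑ j, c j • K.mkQ (y j) = K.mkQ (∑ j, c j • y j)
    rw [map_sum]
    simp
  have hφB : ∀ i, φ (B i) = 0 := by
    intro i
    rw [hφ_apply, Submodule.mkQ_apply, Submodule.Quotient.mk_eq_zero]
    exact hmem i
  have hUle : U ≤ LinearMap.ker φ := by
    rw [hU, Submodule.span_le]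
    rintro _ ⟨i, rfl⟩
    exact hφB i
  obtain ⟨h, hh⟩ := hK ((κ → R) ⧸ U) hFP (Submodule.liftQ U φ hUle)
  set u : κ → M := fun j => h (U.mkQ (Pi.single j 1)) with hu
  have hmku : ∀ j, K.mkQ (u j) = K.mkQ (y j) := by
    intro j
    have h1 := LinearMap.congr_fun hh (U.mkQ (Pi.single j 1))
    simp only [LinearMap.comp_apply, Submodule.mkQ_apply, Submodule.liftQ_apply] at h1
    rw [hu]
    simp only [Submodule.mkQ_apply]
    rw [h1, hφ_apply, Submodule.mkQ_apply]
    congr 1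
    simp [Pi.single_apply, ite_smul]
  have hBsingle : ∀ i, (∑ j, B i j • (Pi.single j (1 : R) : κ → R)) = B i := by
    intro i
    ext k
    simp [Pi.single_apply, mul_ite]
  refine ⟨fun j => y j - u j, ?_, ?_⟩
  · intro j
    have h2 : K.mkQ (y j - u j) = 0 := by rw [map_sub, hmku j, sub_self]
    rw [Submodule.mkQ_apply] at h2
    exact (Submodule.Quotient.mk_eq_zero K).1 h2
  · intro i
    have hsum_u : ∑ j, B i j • u j = 0 := by
      rw [hu]
      simp only [← map_smul, ← map_sum]
      rw [hBsingle i]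
      have : U.mkQ (B i) = 0 := by
        simpa [Submodule.Quotient.mk_eq_zero] using
          (Submodule.subset_span (Set.mem_range_self i) : (B i : κ → R) ∈ U)
      rw [this, map_zero]
    calc ∑ j, B i j • (y j - u j)
        = ∑ j, B i j • y j - ∑ j, B i j • u j := by
          simp [smul_sub, Finset.sum_sub_distrib]
      _ = ∑ j, B i j • y j := by rw [hsum_u, sub_zero]

/-- If `τ` is hereditary and `Flat(R)` has enough flat objects, then every pure submodule of
a `τ`-cotorsion-free flat module is flat and `τ`-cotorsion-free: the class of flat objects of
`Flat(R)` is closed under pure submodules. -/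
theorem flat_objects_closed_under_pure_submodules (R : Type u) [CommRing R]
    (hher : ∀ (M : Type u) [AddCommGroup M] [Module R M], TauTorsion R M →
      ∀ K : Submodule R M, TauTorsion R ↥K)
    (henough : ∀ (F : Type u) [AddCommGroup F] [Module R F], Module.Flat R F →
      ∃ (G : ModuleCat.{u} R) (f : ↥G →ₗ[R] F),
        IsFlatObjectOfFlat R ↥G ∧ EpiInFlat f) :
    ∀ (M : Type u) [AddCommGroup M] [Module R M], Module.Flat R M →
      TauCotorsionFree R M →
      ∀ K : Submodule R M, IsPureSubmodule K →
        Module.Flat R ↥K ∧ TauCotorsionFree R ↥K := by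
  classical
  obtain ⟨G₀m, e₀, hfo₀, hepi₀⟩ := henough R inferInstance
  set A : Ideal R := LinearMap.range e₀ with hA
  have hAtors : TauTorsion R (R ⧸ A) := tauTorsion_quotient_range hepi₀
  intro M _ _ hMflat hMcf K hKpure
  have hMA : (A • ⊤ : Submodule R M) = ⊤ := hMcf.smul_top hAtors
  constructor
  · -- flatness of K
    haveI := hMflat
    rw [Module.Flat.iff_forall_isTrivialRelation]
    intro ι f x hrel
    have hrelM : ∑ i, f i • ((x i : M)) = 0 := by
      have := congrArg (K.subtype) hrel
      simpa using this
    obtain ⟨κ, a, y, hxy, hfa⟩ := Module.Flat.isTrivialRelation_of_sum_smul_eq_zero hrelM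
    have hmem : ∀ i : ULift.{u} (Fin ι),
        ∑ j : ULift.{u} (Fin κ), a i.down j.down • y j.down ∈ K := by
      intro i
      have h1 : ∑ j : ULift.{u} (Fin κ), a i.down j.down • y j.down = ∑ j, a i.down j • y j :=
        Fintype.sum_equiv Equiv.ulift _ _ (fun _ => rfl)
      rw [h1, ← hxy i.down]; exact (x i.down).2
    obtain ⟨z, hzK, hz⟩ := hKpure.exists_rep
      (fun (i : ULift.{u} (Fin ι)) (j : ULift.{u} (Fin κ)) => a i.down j.down)
      (fun j => y j.down) hmem
    refine ⟨κ, a, fun j => ⟨z ⟨j⟩, hzK ⟨j⟩⟩, ?_, hfa⟩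
    intro i
    have hcoe : ((∑ j, a i j • (⟨z ⟨j⟩, hzK ⟨j⟩⟩ : ↥K) : ↥K) : M) = ∑ j, a i j • z ⟨j⟩ := by
      simp
    have hM' : ((x i : M)) = ∑ j, a i j • z ⟨j⟩ := by
      have h2 := hz ⟨i⟩
      have h3 : ∑ j : ULift.{u} (Fin κ), a i j.down • z j = ∑ j, a i j • z ⟨j⟩ :=
        Fintype.sum_equiv Equiv.ulift _ _ (fun _ => rfl)
      have h4 : ∑ j : ULift.{u} (Fin κ), a i j.down • y j.down = ∑ j, a i j • y j :=
        Fintype.sum_equiv Equiv.ulift _ _ (fun _ => rfl)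
      rw [← h3, h2, h4]; exact hxy i
    exact Subtype.ext (hM'.trans hcoe.symm)
  · -- cotorsion-freeness of K
    intro L hL
    rw [eq_top_iff]
    rintro ⟨xv, hxK⟩ -
    have hx : xv ∈ (A • ⊤ : Submodule R M) := by rw [hMA]; trivial
    obtain ⟨ιx, hιx, a, m, haA, hxsum0⟩ := exists_fin_rep A hx
    letI := hιx
    have hxsum : xv = ∑ i : ιx, a i • m i := hxsum0
    have hmemK : ∑ j, a j • m j ∈ K := by rw [← hxsum]; exact hxK
    obtain ⟨z, hzK, hz⟩ := IsPureSubmodule.exists_rep (ι := PUnit) (κ := ιx) hKpure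
      (fun _ => a) m (fun _ => hmemK)
    have hz0 : ∑ j, a j • z j = ∑ j, a j • m j := hz PUnit.unit
    have hxz : (⟨xv, hxK⟩ : ↥K) = ∑ j, a j • (⟨z j, hzK j⟩ : ↥K) := by
      have hcoe : ((∑ j, a j • (⟨z j, hzK j⟩ : ↥K) : ↥K) : M) = ∑ j, a j • z j := by
        simp
      have hM' : xv = ∑ j, a j • z j := by rw [hxsum, ← hz0]
      exact Subtype.ext (hM'.trans hcoe.symm)
    have hq : L.mkQ (⟨xv, hxK⟩ : ↥K) = 0 := by
      rw [hxz, map_sum]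
      refine Finset.sum_eq_zero fun j _ => ?_
      rw [map_smul]
      exact smul_eq_zero_of_tauTorsion hher hfo₀ e₀ hL (haA j) _
    simpa [Submodule.Quotient.mk_eq_zero] using hq
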